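/- arXiv:1710.04441 — 3 statements merged into one kernel-verified Lean document; each statement's English description precedes it below -/
import Mathlib

section
/- Let A_{-1}=0, A_0=1, and let a_1, a_2, ... be arbitrary real numbers. Define A_N recursively by A_N = (1/N)·∑_{n=1}^{N} a_n·A_{N-n}. Then for all N ≥ 1, A_N − A_{N-1} = (1/N)·∑_{n=1}^{N} (a_n − 1)·(A_{N-n} − A_{N-n-1}). -/
/-!
Clearing the factor `1/N`, the recursion reads `N A_N = ∑ a_n A_{N-n}` for every `N`, and, since
`A_{-1} = 0`, at `N - 1` it reads `(N - 1) A_{N-1} = ∑_{n ≤ N} a_n A_{N-n-1}`. Subtracting, and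
using that `∑_{n ≤ N} (A_{N-n} - A_{N-n-1})` telescopes to `A_{N-1}`, gives the identity.
-/

open Finset

theorem sum_Icc_sub_sub_one {G : Type*} [AddCommGroup G] (A : ℤ → G) (m : ℤ) (N : ℕ) :
    ∑ n ∈ Icc 1 N, (A (m - n) - A (m - n - 1)) = A (m - 1) - A (m - N - 1) := by
  induction N with
  | zero => simp
  | succ N ih =>
    rw [sum_Icc_succ_top (by omega), ih]
    push_cast
    ring_nf
    abel

section Recursion

variable (a : ℕ → ℝ) (A : ℤ → ℝ)

theorem natCast_mul_eq_sum_of_rec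
    (hrec : ∀ N : ℕ, 1 ≤ N →
      A N = (1 / (N : ℝ)) * ∑ n ∈ Icc 1 N, a n * A ((N : ℤ) - n)) (N : ℕ) :
    (N : ℝ) * A N = ∑ n ∈ Icc 1 N, a n * A ((N : ℤ) - n) := by
  rcases N.eq_zero_or_pos with rfl | hN
  · simp
  · rw [hrec N hN]
    field_simp

theorem sum_mul_sub_one_eq_of_rec (hAneg : A (-1) = 0)
    (hrec : ∀ N : ℕ, 1 ≤ N →
      A N = (1 / (N : ℝ)) * ∑ n ∈ Icc 1 N, a n * A ((N : ℤ) - n)) {N : ℕ} (hN : 1 ≤ N) :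
    ∑ n ∈ Icc 1 N, a n * A ((N : ℤ) - n - 1) = ((N : ℝ) - 1) * A ((N : ℤ) - 1) := by
  obtain ⟨M, rfl⟩ := Nat.exists_eq_add_of_le' hN
  -- the extra term `n = M + 1` of the sum is `a_{M+1} A_{-1} = 0`
  rw [sum_Icc_succ_top hN]
  push_cast
  simp only [sub_self, zero_sub, hAneg, mul_zero, add_zero, add_sub_cancel_right]
  rw [natCast_mul_eq_sum_of_rec a A hrec M]
  exact sum_congr rfl fun _ _ ↦ by ring_nf

end Recursion

theorem stmt_0_general (a : ℕ → ℝ) (A : ℤ → ℝ)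
    (hAneg : A (-1) = 0)
    (hrec : ∀ N : ℕ, 1 ≤ N →
      A N = (1 / (N : ℝ)) * ∑ n ∈ Finset.Icc 1 N, a n * A ((N : ℤ) - n)) :
    ∀ N : ℕ, 1 ≤ N →
      A N - A ((N : ℤ) - 1) =
        (1 / (N : ℝ)) * ∑ n ∈ Finset.Icc 1 N,
          (a n - 1) * (A ((N : ℤ) - n) - A ((N : ℤ) - n - 1)) := by
  intro N hN
  have hsplit : ∑ n ∈ Icc 1 N, (a n - 1) * (A ((N : ℤ) - n) - A ((N : ℤ) - n - 1)) =
      ∑ n ∈ Icc 1 N, a n * A ((N : ℤ) - n) - ∑ n ∈ Icc 1 N, a n * A ((N : ℤ) - n - 1) -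
        ∑ n ∈ Icc 1 N, (A ((N : ℤ) - n) - A ((N : ℤ) - n - 1)) := by
    rw [← sum_sub_distrib, ← sum_sub_distrib]
    exact sum_congr rfl fun _ _ ↦ by ring
  have hN0 : (N : ℝ) ≠ 0 := by positivity
  rw [hsplit, ← natCast_mul_eq_sum_of_rec a A hrec N, sum_mul_sub_one_eq_of_rec a A hAneg hrec hN,
    sum_Icc_sub_sub_one, sub_self, zero_sub, hAneg]
  field_simp
  ring

/-- Difference identity for the recursively defined sequence
`A_N = (1/N) ∑_{n=1}^N a_n A_{N-n}` with `A_{-1} = 0`, `A_0 = 1`. -/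
theorem stmt_0 (a : ℕ → ℝ) (A : ℤ → ℝ)
    (hAneg : A (-1) = 0) (hA0 : A 0 = 1)
    (hrec : ∀ N : ℕ, 1 ≤ N →
      A N = (1 / (N : ℝ)) * ∑ n ∈ Finset.Icc 1 N, a n * A ((N : ℤ) - n)) :
    ∀ N : ℕ, 1 ≤ N →
      A N - A ((N : ℤ) - 1) =
        (1 / (N : ℝ)) * ∑ n ∈ Finset.Icc 1 N,
          (a n - 1) * (A ((N : ℤ) - n) - A ((N : ℤ) - n - 1)) :=
  stmt_0_general a A hAneg hrec
end

section
/- Let A_{-1}=0, A_0=1, and suppose a_n > 1 for all n ≥ 1. If A_N = (1/N)·∑_{n=1}^{N} a_n·A_{N-n} for all N ≥ 1, then the sequence (A_N) is strictly increasing: A_N > A_{N-1} for all N ≥ 1. -/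
/-!
Write `d k = A k - A (k - 1)`. Subtracting the recursion at `N - 1` from the one at `N` and using
`A (N - 1) = ∑_{n=1}^N d (N - n)` gives `N d N = ∑_{n=1}^N (a n - 1) d (N - n)`. Since `d 0 = 1` and
every `a n - 1` is positive, strong induction shows `d N > 0` for all `N`.
-/

open Finset

theorem Finset.sum_Icc_sub_telescope {M : Type*} [AddCommGroup M] (f : ℤ → M) (N : ℕ) :
    ∑ n ∈ Icc 1 N, (f (N - n) - f (N - n - 1)) = f (N - 1) - f (-1) := by
  induction N generalizing f with
  | zero => simp
  | succ N ih =>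
    calc ∑ n ∈ Icc 1 (N + 1), (f ((N + 1 : ℕ) - n) - f ((N + 1 : ℕ) - n - 1))
        = ∑ n ∈ Icc 1 N, (f (N - n + 1) - f (N - n - 1 + 1)) + (f 0 - f (-1)) := by
          rw [sum_Icc_succ_top (by omega)]
          push_cast
          ring_nf
      _ = f (N - 1 + 1) - f (-1 + 1) + (f 0 - f (-1)) := by rw [ih (fun k => f (k + 1))]
      _ = f ((N + 1 : ℕ) - 1) - f (-1) := by push_cast; ring_nf; abel

theorem pos_of_mul_eq_sum_Icc {R : Type*} [Semiring R] [LinearOrder R] [IsStrictOrderedRing R]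
    {c d : ℕ → R} (hc : ∀ n, 1 ≤ n → 0 < c n) (hd₀ : 0 < d 0)
    (hd : ∀ N, 1 ≤ N → N * d N = ∑ n ∈ Icc 1 N, c n * d (N - n)) (N : ℕ) : 0 < d N := by
  induction N using Nat.strong_induction_on with
  | _ N ih =>
    rcases Nat.eq_zero_or_pos N with rfl | hN
    · exact hd₀
    have hsum : 0 < ∑ n ∈ Icc 1 N, c n * d (N - n) := by
      refine sum_pos (fun n hn => ?_) (nonempty_Icc.mpr hN)
      rw [mem_Icc] at hn
      exact mul_pos (hc n hn.1) (ih _ (by omega))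
    rw [← hd N hN] at hsum
    exact pos_of_mul_pos_right hsum (Nat.cast_nonneg N)

section Recursion

variable {K : Type*} [Field K] [CharZero K] {a : ℕ → K} {A : ℤ → K}

theorem mul_eq_sum_of_rec
    (hrec : ∀ N : ℕ, 1 ≤ N → A N = (1 / (N : K)) * ∑ n ∈ Icc 1 N, a n * A ((N : ℤ) - n))
    (N : ℕ) : (N : K) * A N = ∑ n ∈ Icc 1 N, a n * A ((N : ℤ) - n) := by
  rcases Nat.eq_zero_or_pos N with rfl | hN
  · simp
  rw [hrec N hN, ← mul_assoc, mul_one_div_cancel (Nat.cast_ne_zero.mpr hN.ne'), one_mul]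

theorem mul_sub_pred_eq_sum_of_rec (hAneg : A (-1) = 0)
    (hrec : ∀ N : ℕ, 1 ≤ N → A N = (1 / (N : K)) * ∑ n ∈ Icc 1 N, a n * A ((N : ℤ) - n))
    (N : ℕ) (hN : 1 ≤ N) :
    (N : K) * (A N - A ((N : ℤ) - 1)) =
      ∑ n ∈ Icc 1 N, (a n - 1) * (A ((N : ℤ) - n) - A ((N : ℤ) - n - 1)) := by
  obtain ⟨M, rfl⟩ := Nat.exists_eq_add_of_le' hN
  -- the recursion at `M`, padded with the vanishing term `a (M + 1) * A (-1)`
  have hprev : ∑ n ∈ Icc 1 (M + 1), a n * A (((M + 1 : ℕ) : ℤ) - n - 1) = M * A M := by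
    rw [sum_Icc_succ_top (by omega), mul_eq_sum_of_rec hrec M]
    simp only [Nat.cast_add, Nat.cast_one, sub_self, zero_sub, hAneg, mul_zero, add_zero]
    refine sum_congr rfl fun n _ => ?_
    ring_nf
  have htel := sum_Icc_sub_telescope A (M + 1)
  rw [hAneg, sub_zero] at htel
  calc ((M + 1 : ℕ) : K) * (A (M + 1 : ℕ) - A ((M + 1 : ℕ) - 1))
      = (M + 1 : ℕ) * A (M + 1 : ℕ) - M * A M - A ((M + 1 : ℕ) - 1) := by push_cast; ring_nf
    _ = _ := by
      rw [mul_eq_sum_of_rec hrec, ← hprev, ← htel, ← sum_sub_distrib, ← sum_sub_distrib]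
      refine sum_congr rfl fun n _ => ?_
      ring

end Recursion

/-- If `a_n > 1` for all `n ≥ 1`, the sequence defined by
`A_N = (1/N) ∑_{n=1}^N a_n A_{N-n}` (with `A_{-1}=0`, `A_0=1`) is strictly increasing. -/
theorem stmt_1 (a : ℕ → ℝ) (A : ℤ → ℝ)
    (hAneg : A (-1) = 0) (hA0 : A 0 = 1)
    (ha : ∀ n : ℕ, 1 ≤ n → 1 < a n)
    (hrec : ∀ N : ℕ, 1 ≤ N →
      A N = (1 / (N : ℝ)) * ∑ n ∈ Finset.Icc 1 N, a n * A ((N : ℤ) - n)) :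
    ∀ N : ℕ, 1 ≤ N → A ((N : ℤ) - 1) < A N := by
  intro N _
  suffices h : 0 < A N - A ((N : ℤ) - 1) by linarith
  refine pos_of_mul_eq_sum_Icc (c := fun n => a n - 1) (d := fun k => A k - A ((k : ℤ) - 1))
    (fun n hn => sub_pos.mpr (ha n hn)) (by simp [hA0, hAneg]) (fun M hM => ?_) N
  rw [mul_sub_pred_eq_sum_of_rec hAneg hrec M hM]
  refine sum_congr rfl fun n hn => ?_
  rw [Nat.cast_sub (mem_Icc.mp hn).2]
end

section
/- For every β > 0 and every x ∈ ℤ^d, the lattice Brownian-bridge weight ∫ P^β_{0x}(dω) = (e^{−2dβ}/π^d)·∏_{j=1}^d ∫_0^π e^{2β cos k}·cos(k x_j) dk is strictly positive. -/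
/-!
Expanding `exp (c cos k)` in powers of `cos k` writes `∫₀^π exp (c cos k) cos (n k) dk` as
`∑ₘ cᵐ/m! · ∫₀^π cosᵐ k cos (n k) dk`. The product-to-sum formula
`2 cos k cos ((n+1) k) = cos (n k) + cos ((n+2) k)` shows by induction on `m` that each moment
`∫₀^π cosᵐ k cos (n k) dk` is a nonnegative combination of the `∫₀^π cos (j k) dk ∈ {0, π}`, hence
nonnegative, and that the diagonal moment `m = n` is positive. For `c > 0` the series therefore
has nonnegative terms and a positive `n`-th term.
-/

open Real MeasureTheory intervalIntegral

noncomputable def cosMoment (m n : ℕ) : ℝ :=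
  ∫ k in (0 : ℝ)..π, cos k ^ m * cos (n * k)

namespace cosMoment

theorem intervalIntegrable (m n : ℕ) (a b : ℝ) :
    IntervalIntegrable (fun k => cos k ^ m * cos (n * k)) volume a b :=
  (by fun_prop : Continuous fun k : ℝ => cos k ^ m * cos (n * k)).intervalIntegrable a b

theorem zero_zero : cosMoment 0 0 = π := by
  simp [cosMoment]

theorem zero_of_ne_zero {n : ℕ} (hn : n ≠ 0) : cosMoment 0 n = 0 := by
  simp only [cosMoment, pow_zero, one_mul]
  rw [integral_comp_mul_left cos (Nat.cast_ne_zero.mpr hn)]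
  simp [sin_nat_mul_pi]

theorem succ_zero (m : ℕ) : cosMoment (m + 1) 0 = cosMoment m 1 := by
  simp only [cosMoment, pow_succ, Nat.cast_zero, zero_mul, cos_zero, mul_one, Nat.cast_one,
    one_mul]

theorem succ_succ (m n : ℕ) :
    cosMoment (m + 1) (n + 1) = (cosMoment m (n + 2) + cosMoment m n) / 2 := by
  have product_to_sum : ∀ k : ℝ, cos k ^ (m + 1) * cos ((n + 1 : ℕ) * k) =
      (cos k ^ m * cos ((n + 2 : ℕ) * k) + cos k ^ m * cos (n * k)) / 2 := by
    intro k
    have h := two_mul_cos_mul_cos ((n + 1 : ℕ) * k) k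
    rw [show ((n + 1 : ℕ) : ℝ) * k - k = n * k by push_cast; ring,
      show ((n + 1 : ℕ) : ℝ) * k + k = (n + 2 : ℕ) * k by push_cast; ring] at h
    linear_combination (cos k ^ m / 2) * h
  simp only [cosMoment, product_to_sum]
  rw [intervalIntegral.integral_div,
    integral_add (intervalIntegrable m (n + 2) _ _) (intervalIntegrable m n _ _)]

theorem nonneg (m n : ℕ) : 0 ≤ cosMoment m n := by
  induction m generalizing n with
  | zero =>
    rcases eq_or_ne n 0 with rfl | hn
    · exact zero_zero ▸ pi_pos.le
    · exact (zero_of_ne_zero hn).ge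
  | succ m ih =>
    cases n with
    | zero => exact succ_zero m ▸ ih 1
    | succ n => rw [succ_succ]; linarith [ih (n + 2), ih n]

theorem self_pos (n : ℕ) : 0 < cosMoment n n := by
  induction n with
  | zero => exact zero_zero ▸ pi_pos
  | succ n ih => rw [succ_succ]; linarith [nonneg n (n + 2)]

end cosMoment

theorem hasSum_integral_exp_mul_cos_mul (c : ℝ) (n : ℕ) :
    HasSum (fun m : ℕ => c ^ m / m.factorial * cosMoment m n)
      (∫ k in (0 : ℝ)..π, exp (c * cos k) * cos (n * k)) := by
  simp only [cosMoment, ← intervalIntegral.integral_const_mul]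
  refine hasSum_integral_of_dominated_convergence (fun m _ => |c| ^ m / m.factorial)
    (fun m => ?_) (fun m => ?_) (.of_forall fun _ _ => summable_pow_div_factorial |c|)
    intervalIntegrable_const (.of_forall fun k _ => ?_)
  · exact (by fun_prop : Continuous fun k : ℝ =>
      c ^ m / m.factorial * (cos k ^ m * cos (n * k))).aestronglyMeasurable
  · refine .of_forall fun k _ => ?_
    have hcos : |cos k ^ m * cos (n * k)| ≤ 1 := by
      rw [abs_mul, abs_pow]
      exact mul_le_one₀ (pow_le_one₀ (abs_nonneg _) (abs_cos_le_one k)) (abs_nonneg _)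
        (abs_cos_le_one _)
    rw [norm_mul, norm_div, norm_pow, Real.norm_eq_abs, Real.norm_eq_abs, Nat.abs_cast]
    exact mul_le_of_le_one_right (by positivity) hcos
  · have hexp : HasSum (fun m : ℕ => (c * cos k) ^ m / m.factorial) (exp (c * cos k)) := by
      rw [exp_eq_exp_ℝ]
      exact NormedSpace.expSeries_div_hasSum_exp (c * cos k)
    exact (hexp.mul_right (cos (n * k))).congr_fun fun m => by ring

theorem integral_exp_mul_cos_mul_pos {c : ℝ} (hc : 0 < c) (n : ℕ) :
    0 < ∫ k in (0 : ℝ)..π, exp (c * cos k) * cos (n * k) := by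
  have hterm : 0 < c ^ n / n.factorial * cosMoment n n := by
    have := cosMoment.self_pos n
    positivity
  exact hterm.trans_le <| le_hasSum (hasSum_integral_exp_mul_cos_mul c n) n fun m _ =>
    mul_nonneg (by positivity) (cosMoment.nonneg m n)

theorem cos_mul_intCast_eq_cos_natAbs_mul (k : ℝ) (z : ℤ) :
    cos (k * z) = cos (z.natAbs * k) := by
  rw [Nat.cast_natAbs, Int.cast_abs]
  rcases abs_choice (z : ℝ) with h | h <;> rw [h, mul_comm]
  rw [neg_mul, cos_neg]

/-- Positivity of the lattice Brownian-bridge weight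
`⟨x|e^{βΔ}|0⟩ = (e^{−2dβ}/π^d) ∏_j ∫_0^π e^{2β cos k} cos(k x_j) dk` on `ℤ^d`. -/
theorem stmt_9 (d : ℕ) (β : ℝ) (hβ : 0 < β) (x : Fin d → ℤ) :
    0 < (Real.exp (-2 * d * β) / Real.pi ^ d) *
      ∏ j : Fin d, ∫ k in (0 : ℝ)..Real.pi,
        Real.exp (2 * β * Real.cos k) * Real.cos (k * (x j : ℝ)) := by
  refine mul_pos (div_pos (exp_pos _) (pow_pos pi_pos d)) (Finset.prod_pos fun j _ => ?_)
  simp only [cos_mul_intCast_eq_cos_natAbs_mul]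
  exact integral_exp_mul_cos_mul_pos (by positivity) _
end
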